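/- The embedding of sMC into LJ⁺ + (Peirce) holds cut-free: a sequent Γ ⇒ γ is provable in sMC without cut if and only if f(Γ) ⇒ f(γ) is provable in LJ⁺ + (Peirce) without cut. -/

import Mathlib

inductive Fm : Type
  | var : ℕ → Fm
  | conj : Fm → Fm → Fm
  | disj : Fm → Fm → Fm
  | impl : Fm → Fm → Fm
  | neg : Fm → Fm
  deriving DecidableEq

open Fm

/-- Optional rules: cut, (ex-middle), (Peirce), (g-ex-middle), (at-ex-middle). -/
structure Rules where
  cut : Bool := false
  exMid : Bool := false
  peirce : Bool := false
  gem : Bool := false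
  atEx : Bool := false

/-- The sequent calculus sC for Wansing's connexive logic C, with optional extra rules. -/
inductive SC (R : Rules) : Finset Fm → Fm → Prop
  | init1 (p : ℕ) (Γ : Finset Fm) : SC R (insert (var p) Γ) (var p)
  | init2 (p : ℕ) (Γ : Finset Fm) : SC R (insert (neg (var p)) Γ) (neg (var p))
  | cut {Γ Δ : Finset Fm} {a c : Fm} : R.cut = true →
      SC R Γ a → SC R (insert a Δ) c → SC R (Γ ∪ Δ) c
  | implL {Γ Δ : Finset Fm} {a b c : Fm} :
      SC R Γ a → SC R (insert b Δ) c → SC R (insert (impl a b) (Γ ∪ Δ)) c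
  | implR {Γ : Finset Fm} {a b : Fm} :
      SC R (insert a Γ) b → SC R Γ (impl a b)
  | conjL {Γ : Finset Fm} {a b c : Fm} :
      SC R (insert a (insert b Γ)) c → SC R (insert (conj a b) Γ) c
  | conjR {Γ : Finset Fm} {a b : Fm} :
      SC R Γ a → SC R Γ b → SC R Γ (conj a b)
  | disjL {Γ : Finset Fm} {a b c : Fm} :
      SC R (insert a Γ) c → SC R (insert b Γ) c → SC R (insert (disj a b) Γ) c
  | disjR1 {Γ : Finset Fm} {a b : Fm} : SC R Γ a → SC R Γ (disj a b)
  | disjR2 {Γ : Finset Fm} {a b : Fm} : SC R Γ b → SC R Γ (disj a b)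
  | negnegL {Γ : Finset Fm} {a c : Fm} :
      SC R (insert a Γ) c → SC R (insert (neg (neg a)) Γ) c
  | negnegR {Γ : Finset Fm} {a : Fm} : SC R Γ a → SC R Γ (neg (neg a))
  | negimplL {Γ Δ : Finset Fm} {a b c : Fm} :
      SC R Γ a → SC R (insert (neg b) Δ) c → SC R (insert (neg (impl a b)) (Γ ∪ Δ)) c
  | negimplR {Γ : Finset Fm} {a b : Fm} :
      SC R (insert a Γ) (neg b) → SC R Γ (neg (impl a b))
  | negconjL {Γ : Finset Fm} {a b c : Fm} :
      SC R (insert (neg a) Γ) c → SC R (insert (neg b) Γ) c →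
      SC R (insert (neg (conj a b)) Γ) c
  | negconjR1 {Γ : Finset Fm} {a b : Fm} : SC R Γ (neg a) → SC R Γ (neg (conj a b))
  | negconjR2 {Γ : Finset Fm} {a b : Fm} : SC R Γ (neg b) → SC R Γ (neg (conj a b))
  | negdisjL {Γ : Finset Fm} {a b c : Fm} :
      SC R (insert (neg a) (insert (neg b) Γ)) c → SC R (insert (neg (disj a b)) Γ) c
  | negdisjR {Γ : Finset Fm} {a b : Fm} :
      SC R Γ (neg a) → SC R Γ (neg b) → SC R Γ (neg (disj a b))
  | exMid {Γ : Finset Fm} {a c : Fm} : R.exMid = true →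
      SC R (insert (neg a) Γ) c → SC R (insert a Γ) c → SC R Γ c
  | peirce {Γ : Finset Fm} {a b : Fm} : R.peirce = true →
      SC R (insert (impl a b) Γ) a → SC R Γ a
  | gem {Γ : Finset Fm} {a b c : Fm} : R.gem = true →
      SC R (insert (impl a b) Γ) c → SC R (insert a Γ) c → SC R Γ c
  | atEx {Γ : Finset Fm} {p : ℕ} {c : Fm} : R.atEx = true →
      SC R (insert (neg (var p)) Γ) c → SC R (insert (var p) Γ) c → SC R Γ c

/-- sC (with cut). -/
def sC : Rules := { cut := true }
/-- cut-free sC. -/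
def sCcf : Rules := {}
/-- sC3 = sC + (ex-middle). -/
def sC3 : Rules := { cut := true, exMid := true }
/-- sMC = sC + (Peirce). -/
def sMC : Rules := { cut := true, peirce := true }
/-- sMC* = sC + (g-ex-middle). -/
def sMCstar : Rules := { cut := true, gem := true }

/-- Positive intuitionistic formulas over Φ ∪ Φ' (pos p = p ∈ Φ, ppos p = p' ∈ Φ'). -/
inductive PFm : Type
  | pos : ℕ → PFm
  | ppos : ℕ → PFm
  | conj : PFm → PFm → PFm
  | disj : PFm → PFm → PFm
  | impl : PFm → PFm → PFm
  deriving DecidableEq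

mutual
/-- The translation f from the connexive language into the positive language. -/
def fpos : Fm → PFm
  | .var p => .pos p
  | .conj a b => .conj (fpos a) (fpos b)
  | .disj a b => .disj (fpos a) (fpos b)
  | .impl a b => .impl (fpos a) (fpos b)
  | .neg a => fneg a
/-- f(∼α). -/
def fneg : Fm → PFm
  | .var p => .ppos p
  | .conj a b => .disj (fneg a) (fneg b)
  | .disj a b => .conj (fneg a) (fneg b)
  | .impl a b => .impl (fpos a) (fneg b)
  | .neg a => fpos a
end

/-- Optional rules for the positive calculus. -/
structure PRules where
  cut : Bool := false
  peirce : Bool := false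

/-- LJ⁺: single-succedent positive intuitionistic sequent calculus, optional cut/Peirce. -/
inductive LJ (R : PRules) : Finset PFm → PFm → Prop
  | init1 (p : ℕ) (Γ : Finset PFm) : LJ R (insert (.pos p) Γ) (.pos p)
  | init2 (p : ℕ) (Γ : Finset PFm) : LJ R (insert (.ppos p) Γ) (.ppos p)
  | cut {Γ Δ : Finset PFm} {a c : PFm} : R.cut = true →
      LJ R Γ a → LJ R (insert a Δ) c → LJ R (Γ ∪ Δ) c
  | implL {Γ Δ : Finset PFm} {a b c : PFm} :
      LJ R Γ a → LJ R (insert b Δ) c → LJ R (insert (.impl a b) (Γ ∪ Δ)) c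
  | implR {Γ : Finset PFm} {a b : PFm} :
      LJ R (insert a Γ) b → LJ R Γ (.impl a b)
  | conjL {Γ : Finset PFm} {a b c : PFm} :
      LJ R (insert a (insert b Γ)) c → LJ R (insert (.conj a b) Γ) c
  | conjR {Γ : Finset PFm} {a b : PFm} :
      LJ R Γ a → LJ R Γ b → LJ R Γ (.conj a b)
  | disjL {Γ : Finset PFm} {a b c : PFm} :
      LJ R (insert a Γ) c → LJ R (insert b Γ) c → LJ R (insert (.disj a b) Γ) c
  | disjR1 {Γ : Finset PFm} {a b : PFm} : LJ R Γ a → LJ R Γ (.disj a b)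
  | disjR2 {Γ : Finset PFm} {a b : PFm} : LJ R Γ b → LJ R Γ (.disj a b)
  | peirce {Γ : Finset PFm} {a b : PFm} : R.peirce = true →
      LJ R (insert (.impl a b) Γ) a → LJ R Γ a

/-!
The translation `f` commutes with the connectives, pushes `∼` inwards and erases `∼∼`, so it maps
every rule of sC onto an instance of the corresponding rule of LJ⁺ (the `∼∼`-rules onto nothing at
all), and (Peirce) onto (Peirce). This gives the forward direction by induction on derivations.

For the converse, an LJ⁺ derivation of `Δ ⇒ f(γ)` with `Δ ⊆ f(Γ)` is lifted to a derivation of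
`Γ ⇒ γ`, again by induction. What makes this work is that every formula `φ` behaves in sC like
`f(φ)`: the left and right rules of the top connective of `f(φ)` are admissible for `φ`, with
preimages of the immediate subformulas of `f(φ)` as side formulas (for `φ = ∼∼ψ` by the `∼∼`-rules).
The auxiliary formula `α → β` of (Peirce) is lifted to `γ → β̂` for any preimage `β̂` of `β`.
-/

open Finset

def PRules.toRules (R : PRules) : Rules := { cut := R.cut, peirce := R.peirce }

def PFm.toFm : PFm → Fm
  | .pos p => var p
  | .ppos p => neg (var p)
  | .conj a b => .conj a.toFm b.toFm
  | .disj a b => .disj a.toFm b.toFm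
  | .impl a b => .impl a.toFm b.toFm

@[simp] lemma fpos_toFm (x : PFm) : fpos x.toFm = x := by
  induction x <;> simp [PFm.toFm, fpos, fneg, *]

lemma lj_fpos_of_sc {R : PRules} {Γ : Finset Fm} {γ : Fm} (h : SC R.toRules Γ γ) :
    LJ R (Γ.image fpos) (fpos γ) := by
  induction h with
  | init1 p Γ => rw [image_insert]; exact LJ.init1 p _
  | init2 p Γ => rw [image_insert]; exact LJ.init2 p _
  | cut hc _ _ ih₁ ih₂ =>
    rw [image_insert] at ih₂
    rw [image_union]
    exact LJ.cut hc ih₁ ih₂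
  | implL _ _ ih₁ ih₂ | negimplL _ _ ih₁ ih₂ =>
    rw [image_insert] at ih₂
    rw [image_insert, image_union]
    exact LJ.implL ih₁ ih₂
  | implR _ ih | negimplR _ ih =>
    rw [image_insert] at ih
    exact LJ.implR ih
  | conjL _ ih | negdisjL _ ih =>
    rw [image_insert, image_insert] at ih
    rw [image_insert]
    exact LJ.conjL ih
  | conjR _ _ ih₁ ih₂ | negdisjR _ _ ih₁ ih₂ => exact LJ.conjR ih₁ ih₂
  | disjL _ _ ih₁ ih₂ | negconjL _ _ ih₁ ih₂ =>
    rw [image_insert] at ih₁ ih₂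
    rw [image_insert]
    exact LJ.disjL ih₁ ih₂
  | disjR1 _ ih | negconjR1 _ ih => exact LJ.disjR1 ih
  | disjR2 _ ih | negconjR2 _ ih => exact LJ.disjR2 ih
  | negnegL _ ih =>
    rw [image_insert] at ih
    rwa [image_insert]
  | negnegR _ ih => exact ih
  | peirce hc _ ih =>
    rw [image_insert] at ih
    exact LJ.peirce hc ih
  | exMid hc | gem hc | atEx hc => exact absurd hc Bool.false_ne_true

section

variable {R : Rules}

def CanReplace (R : Rules) (φ ψ : Fm) : Prop :=
  (∀ Γ c, SC R (insert φ Γ) c → SC R (insert ψ Γ) c) ∧ ∀ Γ, SC R Γ φ → SC R Γ ψ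

lemma CanReplace.refl (φ : Fm) : CanReplace R φ φ :=
  ⟨fun _ _ h => h, fun _ h => h⟩

lemma CanReplace.trans {φ ψ χ : Fm} (h₁ : CanReplace R φ ψ) (h₂ : CanReplace R ψ χ) :
    CanReplace R φ χ :=
  ⟨fun Γ c h => h₂.1 Γ c (h₁.1 Γ c h), fun Γ h => h₂.2 Γ (h₁.2 Γ h)⟩

lemma CanReplace.sc_of_mem {χ φ γ : Fm} {Γ : Finset Fm} (hχφ : CanReplace R χ φ)
    (hχγ : CanReplace R χ γ) (hφ : φ ∈ Γ) (h : SC R (insert χ Γ) χ) : SC R Γ γ := by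
  rw [← insert_eq_of_mem hφ]
  exact hχφ.1 Γ γ (hχγ.2 _ h)

lemma CanReplace.negneg (φ : Fm) : CanReplace R φ (neg (neg φ)) :=
  ⟨fun _ _ => SC.negnegL, fun _ => SC.negnegR⟩

/-- `φ` behaves in sC like a formula with the top connective of `x`: the left and right rules of
that connective are admissible for `φ`, with side formulas translating to the immediate
subformulas of `x`. -/
def BehavesAs (R : Rules) (φ : Fm) : PFm → Prop
  | .pos p => CanReplace R (var p) φ
  | .ppos p => CanReplace R (neg (var p)) φ
  | .impl a b => ∃ α β, fpos α = a ∧ fpos β = b ∧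
      (∀ Γ Δ c, SC R Γ α → SC R (insert β Δ) c → SC R (insert φ (Γ ∪ Δ)) c) ∧
      (∀ Γ, SC R (insert α Γ) β → SC R Γ φ)
  | .conj a b => ∃ α β, fpos α = a ∧ fpos β = b ∧
      (∀ Γ c, SC R (insert α (insert β Γ)) c → SC R (insert φ Γ) c) ∧
      (∀ Γ, SC R Γ α → SC R Γ β → SC R Γ φ)
  | .disj a b => ∃ α β, fpos α = a ∧ fpos β = b ∧
      (∀ Γ c, SC R (insert α Γ) c → SC R (insert β Γ) c → SC R (insert φ Γ) c) ∧
      (∀ Γ, (SC R Γ α → SC R Γ φ) ∧ (SC R Γ β → SC R Γ φ))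

lemma BehavesAs.of_canReplace {φ ψ : Fm} {x : PFm} (h : BehavesAs R φ x)
    (hφψ : CanReplace R φ ψ) : BehavesAs R ψ x := by
  obtain ⟨hL, hR⟩ := hφψ
  cases x with
  | pos p | ppos p => exact CanReplace.trans h ⟨hL, hR⟩
  | impl a b =>
    obtain ⟨α, β, hα, hβ, L, Rr⟩ := h
    exact ⟨α, β, hα, hβ, fun Γ Δ c h₁ h₂ => hL _ c (L Γ Δ c h₁ h₂), fun Γ h => hR Γ (Rr Γ h)⟩
  | conj a b =>
    obtain ⟨α, β, hα, hβ, L, Rr⟩ := h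
    exact ⟨α, β, hα, hβ, fun Γ c h => hL Γ c (L Γ c h), fun Γ h₁ h₂ => hR Γ (Rr Γ h₁ h₂)⟩
  | disj a b =>
    obtain ⟨α, β, hα, hβ, L, Rr⟩ := h
    exact ⟨α, β, hα, hβ, fun Γ c h₁ h₂ => hL Γ c (L Γ c h₁ h₂),
      fun Γ => ⟨fun h => hR Γ ((Rr Γ).1 h), fun h => hR Γ ((Rr Γ).2 h)⟩⟩

lemma behavesAs_fpos_and_fneg (R : Rules) (φ : Fm) :
    BehavesAs R φ (fpos φ) ∧ BehavesAs R (neg φ) (fneg φ) := by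
  induction φ with
  | var p => exact ⟨CanReplace.refl _, CanReplace.refl _⟩
  | conj α β =>
    exact ⟨⟨α, β, rfl, rfl, fun _ _ => SC.conjL, fun _ => SC.conjR⟩,
      ⟨neg α, neg β, rfl, rfl, fun _ _ => SC.negconjL, fun _ => ⟨SC.negconjR1, SC.negconjR2⟩⟩⟩
  | disj α β =>
    exact ⟨⟨α, β, rfl, rfl, fun _ _ => SC.disjL, fun _ => ⟨SC.disjR1, SC.disjR2⟩⟩,
      ⟨neg α, neg β, rfl, rfl, fun _ _ => SC.negdisjL, fun _ => SC.negdisjR⟩⟩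
  | impl α β =>
    exact ⟨⟨α, β, rfl, rfl, fun _ _ _ => SC.implL, fun _ => SC.implR⟩,
      ⟨α, neg β, rfl, rfl, fun _ _ _ => SC.negimplL, fun _ => SC.negimplR⟩⟩
  | neg ψ ih => exact ⟨ih.2, ih.1.of_canReplace (CanReplace.negneg ψ)⟩

lemma behavesAs_of_fpos_eq {φ : Fm} {x : PFm} (h : fpos φ = x) : BehavesAs R φ x :=
  h ▸ (behavesAs_fpos_and_fneg R φ).1

lemma exists_behavesAs_of_insert_subset {Γ : Finset Fm} {Δ : Finset PFm} {x : PFm}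
    (h : insert x Δ ⊆ Γ.image fpos) : ∃ φ ∈ Γ, BehavesAs R φ x := by
  obtain ⟨φ, hφ, rfl⟩ := mem_image.1 (h (mem_insert_self x Δ))
  exact ⟨φ, hφ, behavesAs_of_fpos_eq rfl⟩

lemma insert_subset_image_insert {α β : Type*} [DecidableEq α] [DecidableEq β] {f : α → β}
    {Δ : Finset β} {Γ : Finset α} {a : α} {b : β} (h : Δ ⊆ Γ.image f) (hb : f a = b) :
    insert b Δ ⊆ (insert a Γ).image f := by
  rw [image_insert, hb]
  exact insert_subset_insert b h

end

lemma sc_of_lj {R : PRules} {Δ : Finset PFm} {c : PFm} (h : LJ R Δ c) {Γ : Finset Fm} {γ : Fm}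
    (hΓ : Δ ⊆ Γ.image fpos) (hγ : fpos γ = c) : SC R.toRules Γ γ := by
  induction h generalizing Γ γ with
  | init1 p =>
    obtain ⟨φ, hφ, hφp⟩ := exists_behavesAs_of_insert_subset hΓ
    exact CanReplace.sc_of_mem hφp (behavesAs_of_fpos_eq hγ) hφ (SC.init1 p Γ)
  | init2 p =>
    obtain ⟨φ, hφ, hφp⟩ := exists_behavesAs_of_insert_subset hΓ
    exact CanReplace.sc_of_mem hφp (behavesAs_of_fpos_eq hγ) hφ (SC.init2 p Γ)
  | @cut _ _ a _ hc _ _ ih₁ ih₂ =>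
    have h₁ := ih₁ (γ := a.toFm) (subset_union_left.trans hΓ) (fpos_toFm a)
    have h₂ := ih₂ (insert_subset_image_insert (subset_union_right.trans hΓ) (fpos_toFm a)) hγ
    simpa only [union_self] using SC.cut hc h₁ h₂
  | implL _ _ ih₁ ih₂ =>
    obtain ⟨φ, hφ, α, β, rfl, rfl, hL, -⟩ := exists_behavesAs_of_insert_subset hΓ
    have hΔ := (insert_subset_iff.1 hΓ).2
    have h₁ := ih₁ (γ := α) (subset_union_left.trans hΔ) rfl
    have h₂ := ih₂ (insert_subset_image_insert (subset_union_right.trans hΔ) rfl) hγ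
    simpa only [union_self, insert_eq_of_mem hφ] using hL Γ Γ γ h₁ h₂
  | implR _ ih =>
    obtain ⟨α, β, rfl, rfl, -, hR⟩ := behavesAs_of_fpos_eq (R := R.toRules) hγ
    exact hR Γ (ih (insert_subset_image_insert hΓ rfl) rfl)
  | conjL _ ih =>
    obtain ⟨φ, hφ, α, β, rfl, rfl, hL, -⟩ := exists_behavesAs_of_insert_subset hΓ
    have hΔ := (insert_subset_iff.1 hΓ).2
    rw [← insert_eq_of_mem hφ]
    exact hL Γ γ (ih (insert_subset_image_insert (insert_subset_image_insert hΔ rfl) rfl) hγ)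
  | conjR _ _ ih₁ ih₂ =>
    obtain ⟨α, β, rfl, rfl, -, hR⟩ := behavesAs_of_fpos_eq (R := R.toRules) hγ
    exact hR Γ (ih₁ hΓ rfl) (ih₂ hΓ rfl)
  | disjL _ _ ih₁ ih₂ =>
    obtain ⟨φ, hφ, α, β, rfl, rfl, hL, -⟩ := exists_behavesAs_of_insert_subset hΓ
    have hΔ := (insert_subset_iff.1 hΓ).2
    rw [← insert_eq_of_mem hφ]
    exact hL Γ γ (ih₁ (insert_subset_image_insert hΔ rfl) hγ)
      (ih₂ (insert_subset_image_insert hΔ rfl) hγ)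
  | disjR1 _ ih =>
    obtain ⟨α, β, rfl, rfl, -, hR⟩ := behavesAs_of_fpos_eq (R := R.toRules) hγ
    exact (hR Γ).1 (ih hΓ rfl)
  | disjR2 _ ih =>
    obtain ⟨α, β, rfl, rfl, -, hR⟩ := behavesAs_of_fpos_eq (R := R.toRules) hγ
    exact (hR Γ).2 (ih hΓ rfl)
  | @peirce _ _ b hc _ ih =>
    subst hγ
    have hβ : fpos (impl γ b.toFm) = .impl (fpos γ) b := by simp [fpos]
    exact SC.peirce hc (ih (insert_subset_image_insert hΓ hβ) rfl)

theorem sc_iff_lj (R : PRules) (Γ : Finset Fm) (γ : Fm) :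
    SC R.toRules Γ γ ↔ LJ R (Γ.image fpos) (fpos γ) :=
  ⟨lj_fpos_of_sc, fun h => sc_of_lj h subset_rfl rfl⟩

/-- cut-free embedding of sMC into LJ⁺ + (Peirce). -/
theorem stmt7 (Γ : Finset Fm) (γ : Fm) :
    SC { peirce := true } Γ γ ↔ LJ { peirce := true } (Γ.image fpos) (fpos γ) :=
  sc_iff_lj { peirce := true } Γ γ
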